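/- Let m_n denote the number of independent dominating sets of the meta-chain hexagonal cactus M_n, and set m_0 = 1 (the one-vertex graph M_0 has exactly one maximal independent set). Then m_1 = 5, m_2 = 19, and for every n ≥ 3, m_n = 3m_{n-1} + m_{n-2} + 2m_{n-3}. -/

import Mathlib

/-- `S` is an independent dominating set of `G`: pairwise non-adjacent, and every
vertex outside `S` has a neighbour in `S`. -/
def IsIndepDomSet {V : Type*} (G : SimpleGraph V) (S : Finset V) : Prop :=
  (∀ v ∈ S, ∀ w ∈ S, ¬ G.Adj v w) ∧ ∀ v, v ∉ S → ∃ w ∈ S, G.Adj v w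

/-- The meta-chain hexagonal cactus `M n`: `Sum.inl i` is the cut vertex `x i`
(`0 ≤ i ≤ n`) and `Sum.inr (k, t)` for `t = 0, 1, 2, 3` is `a (k+1)`, `b (k+1)`,
`c (k+1)`, `d (k+1)` respectively (`0 ≤ k ≤ n-1`); the `i`-th hexagon
(`1 ≤ i ≤ n`) is the six-cycle `x (i-1) – a i – x i – b i – c i – d i – x (i-1)`. -/
def metaHex (n : ℕ) : SimpleGraph (Fin (n + 1) ⊕ Fin n × Fin 4) :=
  SimpleGraph.fromRel fun p q =>
    match p, q with
    | Sum.inl i, Sum.inr (k, t) =>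
        ((i : ℕ) = (k : ℕ) ∧ (t = 0 ∨ t = 3)) ∨
          ((i : ℕ) = (k : ℕ) + 1 ∧ (t = 0 ∨ t = 1))
    | Sum.inr (k, t), Sum.inr (k', t') =>
        k = k' ∧ ((t = 1 ∧ t' = 2) ∨ (t = 2 ∧ t' = 3))
    | _, _ => False

/-- The number of independent dominating sets of the meta-chain hexagonal cactus `M n`. -/
noncomputable def numIDSMetaHex (n : ℕ) : ℕ :=
  Nat.card {S : Finset (Fin (n + 1) ⊕ Fin n × Fin 4) // IsIndepDomSet (metaHex n) S}

/-!
Scan the hexagons from left to right and record for every cut vertex `x i` whether it lies in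
`S` (state `0`), lies outside `S` but is dominated by `a i` or `b i` (state `1`), or still has
to be dominated by `a (i+1)` or `d (i+1)` (state `2`). Independent dominating sets then
correspond exactly to walks through these three states that start in state `0` or `2`, end in
state `0` or `1`, and whose `i`-th step is labelled by `S ∩ {a i, b i, c i, d i}`. Labelled walks
are counted by powers of the transfer matrix `!![1, 1, 1; 2, 2, 0; 1, 2, 0]`, whose
characteristic polynomial is `X ^ 3 - 3 X ^ 2 - X - 2`; Cayley–Hamilton gives the recurrence.
-/

open Finset Sum

theorem isIndepDomSet_iff_forall_mem_iff {V : Type*} {G : SimpleGraph V} {S : Finset V} :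
    IsIndepDomSet G S ↔ ∀ v, v ∈ S ↔ ∀ w, G.Adj v w → w ∉ S := by
  refine ⟨fun ⟨hind, hdom⟩ v => ⟨fun hv w hvw hw => hind v hv w hw hvw,
    fun h => by_contra fun hv => ?_⟩, fun h => ⟨fun v hv w hw hvw => (h v).1 hv w hvw hw, ?_⟩⟩
  · obtain ⟨w, hw, hvw⟩ := hdom v hv
    exact h w hvw hw
  · intro v hv
    by_contra! hS
    exact hv ((h v).2 fun w hvw hw => hS w hw hvw)

section LabelledWalk

variable {Q L : Type*} (step : Q → L → Q → Prop)

def IsLabelledWalk {n : ℕ} (s : Fin (n + 1) → Q) (l : Fin n → L) : Prop :=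
  ∀ k, step (s k.castSucc) (l k) (s k.succ)

noncomputable def transferMatrix : Matrix Q Q ℕ := fun a b => Nat.card {l // step a l b}

variable {step}

theorem IsLabelledWalk.init {n : ℕ} {s : Fin (n + 2) → Q} {l : Fin (n + 1) → L}
    (h : IsLabelledWalk step s l) : IsLabelledWalk step (Fin.init s) (Fin.init l) := fun k => by
  simpa only [Fin.init, Fin.succ_castSucc] using h k.castSucc

theorem IsLabelledWalk.snoc {n : ℕ} {s : Fin (n + 1) → Q} {l : Fin n → L} {x : L} {b : Q}
    (h : IsLabelledWalk step s l) (hx : step (s (Fin.last n)) x b) :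
    IsLabelledWalk step (Fin.snoc s b : Fin (n + 2) → Q) (Fin.snoc l x) := fun k => by
  induction k using Fin.lastCases with
  | last => simpa only [Fin.snoc_castSucc, Fin.snoc_last, Fin.succ_last] using hx
  | cast j => simpa only [Fin.succ_castSucc, Fin.snoc_castSucc] using h j

def labelledWalkSnocEquiv {n : ℕ} (a b c : Q) :
    {p : {p : (Fin (n + 2) → Q) × (Fin (n + 1) → L) //
        p.1 0 = a ∧ p.1 (Fin.last (n + 1)) = b ∧ IsLabelledWalk step p.1 p.2} //
        p.1.1 (Fin.last n).castSucc = c} ≃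
      {p : (Fin (n + 1) → Q) × (Fin n → L) //
        p.1 0 = a ∧ p.1 (Fin.last n) = c ∧ IsLabelledWalk step p.1 p.2} × {l // step c l b} where
  toFun p := (⟨(Fin.init p.1.1.1, Fin.init p.1.1.2), p.1.2.1, p.2, p.1.2.2.2.init⟩,
    ⟨p.1.1.2 (Fin.last n), by
      obtain ⟨⟨⟨s, l⟩, -, hb, h⟩, hc⟩ := p
      simpa only [← hc, ← hb, Fin.succ_last] using h (Fin.last n)⟩)
  invFun q := ⟨⟨(Fin.snoc q.1.1.1 b, Fin.snoc q.1.1.2 q.2.1),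
      by simpa only [← Fin.castSucc_zero, Fin.snoc_castSucc] using q.1.2.1,
      Fin.snoc_last (α := fun _ => Q) _ _,
      q.1.2.2.2.snoc (by simpa only [q.1.2.2.1] using q.2.2)⟩,
    by simpa only [Fin.snoc_castSucc] using q.1.2.2.1⟩
  left_inv p := by
    obtain ⟨⟨⟨s, l⟩, -, hb, -⟩, -⟩ := p
    ext : 2
    simp only [Fin.snoc_init_self, ← hb]
  right_inv q := by
    ext : 3 <;> simp

variable [Fintype Q] [DecidableEq Q] [Finite L]

theorem card_labelledWalk_eq_transferMatrix_pow (n : ℕ) (a b : Q) :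
    Nat.card {p : (Fin (n + 1) → Q) × (Fin n → L) //
      p.1 0 = a ∧ p.1 (Fin.last n) = b ∧ IsLabelledWalk step p.1 p.2} =
      (transferMatrix step ^ n) a b := by
  induction n generalizing b with
  | zero =>
    rw [pow_zero, Matrix.one_apply]
    split_ifs with hab
    · subst hab
      refine Nat.card_eq_one_iff_unique.2
        ⟨⟨fun p q => ?_⟩, ⟨⟨(fun _ => a, finZeroElim), rfl, rfl, finZeroElim⟩⟩⟩
      ext : 2
      · exact funext fun i => by rw [Fin.fin_one_eq_zero i, p.2.1, q.2.1]
      · exact funext finZeroElim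
    · exact Nat.card_eq_zero.2 (Or.inl ⟨fun p => hab (p.2.1.symm.trans p.2.2.1)⟩)
  | succ n ih =>
    rw [← Nat.card_congr (Equiv.sigmaFiberEquiv fun p => p.1.1 (Fin.last n).castSucc),
      Nat.card_sigma, pow_succ, Matrix.mul_apply]
    refine sum_congr rfl fun c _ => ?_
    rw [Nat.card_congr (labelledWalkSnocEquiv a b c), Nat.card_prod, ih]
    rfl

theorem card_labelledWalk_eq_sum (n : ℕ) (A B : Finset Q) :
    Nat.card {p : (Fin (n + 1) → Q) × (Fin n → L) //
      p.1 0 ∈ A ∧ p.1 (Fin.last n) ∈ B ∧ IsLabelledWalk step p.1 p.2} =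
      ∑ a ∈ A, ∑ b ∈ B, (transferMatrix step ^ n) a b := by
  let ends : {p : (Fin (n + 1) → Q) × (Fin n → L) //
      p.1 0 ∈ A ∧ p.1 (Fin.last n) ∈ B ∧ IsLabelledWalk step p.1 p.2} → A ×ˢ B :=
    fun p => ⟨(p.1.1 0, p.1.1 (Fin.last n)), mem_product.2 ⟨p.2.1, p.2.2.1⟩⟩
  rw [← Nat.card_congr (Equiv.sigmaFiberEquiv ends), Nat.card_sigma,
    ← sum_product' (f := fun a b => (transferMatrix step ^ n) a b), ← sum_coe_sort (A ×ˢ B)]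
  refine sum_congr rfl fun y _ => ?_
  rw [← card_labelledWalk_eq_transferMatrix_pow]
  refine Nat.card_congr
    { toFun x := ⟨x.1.1, congrArg (·.1.1) x.2, congrArg (·.1.2) x.2, x.1.2.2.2⟩
      invFun p := ⟨⟨p.1, ?_, ?_, p.2.2.2⟩, ?_⟩
      left_inv _ := rfl
      right_inv _ := rfl }
  · exact p.2.1.symm ▸ (mem_product.1 y.2).1
  · exact p.2.2.1.symm ▸ (mem_product.1 y.2).2
  · exact Subtype.ext (Prod.ext p.2.1 p.2.2.1)

end LabelledWalk

namespace MetaHex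

variable {n : ℕ}

@[simp] theorem adj_inl_inl (i j : Fin (n + 1)) : ¬ (metaHex n).Adj (inl i) (inl j) := by
  simp [metaHex]

@[simp] theorem adj_inl_inr {i : Fin (n + 1)} {k : Fin n} {t : Fin 4} :
    (metaHex n).Adj (inl i) (inr (k, t)) ↔
      (i = k.castSucc ∧ (t = 0 ∨ t = 3)) ∨ (i = k.succ ∧ (t = 0 ∨ t = 1)) := by
  simp only [metaHex, SimpleGraph.fromRel_adj, ne_eq, reduceCtorEq, not_false_eq_true, or_false,
    true_and, Fin.ext_iff, Fin.val_castSucc, Fin.val_succ]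

@[simp] theorem adj_inr_inl {i : Fin (n + 1)} {k : Fin n} {t : Fin 4} :
    (metaHex n).Adj (inr (k, t)) (inl i) ↔
      (i = k.castSucc ∧ (t = 0 ∨ t = 3)) ∨ (i = k.succ ∧ (t = 0 ∨ t = 1)) := by
  rw [SimpleGraph.adj_comm, adj_inl_inr]

@[simp] theorem adj_inr_inr {k k' : Fin n} {t t' : Fin 4} :
    (metaHex n).Adj (inr (k, t)) (inr (k', t')) ↔
      k = k' ∧ (t = 1 ∧ t' = 2 ∨ t = 2 ∧ t' = 1 ∨ t = 2 ∧ t' = 3 ∨ t = 3 ∧ t' = 2) := by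
  simp only [metaHex, SimpleGraph.fromRel_adj, ne_eq, inr.injEq, Prod.mk.injEq]
  grind

/-- `F ⊆ {a, b, c, d} = {0, 1, 2, 3}` in the hexagon `x – a – y – b – c – d – x`, where the
propositions `x` and `y` say whether the cut vertices are chosen. -/
def IsInteriorMaximal (x y : Prop) (F : Finset (Fin 4)) : Prop :=
  (0 ∈ F ↔ ¬x ∧ ¬y) ∧ (1 ∈ F ↔ ¬y ∧ 2 ∉ F) ∧ (2 ∈ F ↔ 1 ∉ F ∧ 3 ∉ F) ∧ (3 ∈ F ↔ 2 ∉ F ∧ ¬x)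

def Step (τ : Fin 3) (F : Finset (Fin 4)) (σ : Fin 3) : Prop :=
  IsInteriorMaximal (τ = 0) (σ = 0) F ∧ (τ = 2 → 0 ∈ F ∨ 3 ∈ F) ∧
    (σ ≠ 0 → (σ = 1 ↔ 0 ∈ F ∨ 1 ∈ F))

instance (τ σ : Fin 3) : DecidablePred (Step τ · σ) := fun F => by
  unfold Step IsInteriorMaximal; infer_instance

section OfSet

variable (S : Finset (Fin (n + 1) ⊕ Fin n × Fin 4))

def hexFill (k : Fin n) : Finset (Fin 4) := univ.filter fun t => inr (k, t) ∈ S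

@[simp] theorem mem_hexFill {k : Fin n} {t : Fin 4} : t ∈ hexFill S k ↔ inr (k, t) ∈ S := by
  simp [hexFill]

theorem forall_inr_mem_iff_isInteriorMaximal (k : Fin n) :
    (∀ t, inr (k, t) ∈ S ↔ ∀ w, (metaHex n).Adj (inr (k, t)) w → w ∉ S) ↔
      IsInteriorMaximal (inl k.castSucc ∈ S) (inl k.succ ∈ S) (hexFill S k) := by
  simp only [Sum.forall, adj_inr_inl, Fin.isValue, Prod.forall, adj_inr_inr, and_imp,
    Fin.forall_fin_succ (n := 3), Fin.reduceEq, and_false, zero_ne_one, or_self,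
    IsEmpty.forall_iff, implies_true, Fin.forall_fin_succ (n := 2), Fin.succ_zero_eq_one,
    and_true, or_false, false_or, Fin.forall_fin_two, Fin.succ_one_eq_two, Fin.reduceSucc,
    true_and, forall_eq_or_imp, forall_eq, and_self, Fin.succ_ne_zero, forall_const, forall_eq',
    or_true, IsInteriorMaximal, mem_hexFill, and_congr_right_iff]
  grind

def LeftDominated (i : Fin (n + 1)) : Prop :=
  ∃ k : Fin n, k.succ = i ∧ (inr (k, 0) ∈ S ∨ inr (k, 1) ∈ S)

def RightDominated (i : Fin (n + 1)) : Prop :=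
  ∃ k : Fin n, k.castSucc = i ∧ (inr (k, 0) ∈ S ∨ inr (k, 3) ∈ S)

theorem forall_adj_inl_not_mem_iff (i : Fin (n + 1)) :
    (∀ w, (metaHex n).Adj (inl i) w → w ∉ S) ↔ ¬ LeftDominated S i ∧ ¬ RightDominated S i := by
  simp only [Sum.forall, adj_inl_inl, IsEmpty.forall_iff, implies_true, Prod.forall, adj_inl_inr,
    true_and, LeftDominated, not_exists, not_and, not_or, RightDominated]
  grind

theorem leftDominated_zero : ¬ LeftDominated S 0 := fun ⟨k, hk, _⟩ => Fin.succ_ne_zero k hk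

theorem leftDominated_succ (k : Fin n) :
    LeftDominated S k.succ ↔ inr (k, 0) ∈ S ∨ inr (k, 1) ∈ S := by
  simp [LeftDominated]

theorem rightDominated_last : ¬ RightDominated S (Fin.last n) :=
  fun ⟨k, hk, _⟩ => Fin.castSucc_ne_last k hk

theorem rightDominated_castSucc (k : Fin n) :
    RightDominated S k.castSucc ↔ inr (k, 0) ∈ S ∨ inr (k, 3) ∈ S := by
  simp [RightDominated]

open Classical in
noncomputable def cutState (i : Fin (n + 1)) : Fin 3 :=
  if inl i ∈ S then 0 else if LeftDominated S i then 1 else 2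

theorem cutState_eq_zero_iff {i : Fin (n + 1)} : cutState S i = 0 ↔ inl i ∈ S := by
  unfold cutState; split_ifs <;> simp_all

theorem cutState_eq_two_iff {i : Fin (n + 1)} :
    cutState S i = 2 ↔ inl i ∉ S ∧ ¬ LeftDominated S i := by
  unfold cutState; split_ifs <;> simp_all

theorem cutState_zero_ne_one : cutState S 0 ≠ 1 := by
  unfold cutState; split_ifs <;> simp_all [leftDominated_zero]

theorem cutState_succ_eq_one_iff {k : Fin n} (h : cutState S k.succ ≠ 0) :
    cutState S k.succ = 1 ↔ inr (k, 0) ∈ S ∨ inr (k, 1) ∈ S := by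
  revert h; unfold cutState; split_ifs <;> simp_all [leftDominated_succ]

theorem forall_inl_mem_iff_cutState
    (hS : ∀ k, IsInteriorMaximal (inl k.castSucc ∈ S) (inl k.succ ∈ S) (hexFill S k)) :
    (∀ i, inl i ∈ S ↔ ∀ w, (metaHex n).Adj (inl i) w → w ∉ S) ↔
      cutState S (Fin.last n) ≠ 2 ∧
        ∀ k, cutState S k.castSucc = 2 → 0 ∈ hexFill S k ∨ 3 ∈ hexFill S k := by
  have hmem : ∀ i, inl i ∈ S → ¬ LeftDominated S i ∧ ¬ RightDominated S i := by
    refine fun i hi => ⟨fun ⟨k, hk, h⟩ => ?_, fun ⟨k, hk, h⟩ => ?_⟩ <;> subst hk <;>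
      obtain ⟨h0, h1, -, h3⟩ := hS k <;> simp only [mem_hexFill] at h0 h1 h3 <;> tauto
  have hcut : ∀ i, (inl i ∈ S ↔ ∀ w, (metaHex n).Adj (inl i) w → w ∉ S) ↔
      (cutState S i = 2 → RightDominated S i) := fun i => by
    rw [forall_adj_inl_not_mem_iff, cutState_eq_two_iff]
    have := hmem i
    tauto
  simp only [hcut, Fin.forall_fin_succ', rightDominated_castSucc, mem_hexFill]
  simp [rightDominated_last, and_comm]

theorem isIndepDomSet_metaHex_iff :
    IsIndepDomSet (metaHex n) S ↔
      cutState S (Fin.last n) ≠ 2 ∧ IsLabelledWalk Step (cutState S) (hexFill S) := by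
  rw [isIndepDomSet_iff_forall_mem_iff, Sum.forall, Prod.forall]
  simp only [forall_inr_mem_iff_isInteriorMaximal, IsLabelledWalk, Step, cutState_eq_zero_iff]
  constructor
  · rintro ⟨hinl, hS⟩
    obtain ⟨hlast, hright⟩ := (forall_inl_mem_iff_cutState S hS).1 hinl
    exact ⟨hlast, fun k => ⟨hS k, hright k, fun h => by simpa using cutState_succ_eq_one_iff S h⟩⟩
  · rintro ⟨hlast, hwalk⟩
    have hS k := (hwalk k).1
    exact ⟨(forall_inl_mem_iff_cutState S hS).2 ⟨hlast, fun k => (hwalk k).2.1⟩, hS⟩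

end OfSet

variable {S : Finset (Fin (n + 1) ⊕ Fin n × Fin 4)} {s : Fin (n + 1) → Fin 3}
  {F : Fin n → Finset (Fin 4)}

def ofWalk (s : Fin (n + 1) → Fin 3) (F : Fin n → Finset (Fin 4)) :
    Finset (Fin (n + 1) ⊕ Fin n × Fin 4) :=
  (univ.filter (s · = 0)).disjSum (univ.filter fun q => q.2 ∈ F q.1)

@[simp] theorem inl_mem_ofWalk {i : Fin (n + 1)} : inl i ∈ ofWalk s F ↔ s i = 0 := by
  simp [ofWalk]

@[simp] theorem inr_mem_ofWalk {k : Fin n} {t : Fin 4} : inr (k, t) ∈ ofWalk s F ↔ t ∈ F k := by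
  simp [ofWalk]

theorem ofWalk_cutState_hexFill : ofWalk (cutState S) (hexFill S) = S := by
  ext (i | ⟨k, t⟩) <;> simp [cutState_eq_zero_iff]

theorem hexFill_ofWalk : hexFill (ofWalk s F) = F := by
  ext k t; simp

theorem cutState_ofWalk (h0 : s 0 ≠ 1) (hs : IsLabelledWalk Step s F) :
    cutState (ofWalk s F) = s := by
  funext i
  induction i using Fin.cases with
  | zero =>
    simp only [cutState, inl_mem_ofWalk, leftDominated_zero]
    split_ifs <;> grind
  | succ k =>
    have := (hs k).2.2
    simp only [cutState, inl_mem_ofWalk, leftDominated_succ, inr_mem_ofWalk]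
    split_ifs <;> grind

noncomputable def isIndepDomSetEquivWalk (n : ℕ) :
    {S : Finset (Fin (n + 1) ⊕ Fin n × Fin 4) // IsIndepDomSet (metaHex n) S} ≃
      {p : (Fin (n + 1) → Fin 3) × (Fin n → Finset (Fin 4)) //
        p.1 0 ∈ univ.filter (· ≠ 1) ∧ p.1 (Fin.last n) ∈ univ.filter (· ≠ 2) ∧
          IsLabelledWalk Step p.1 p.2} where
  toFun S := ⟨(cutState S, hexFill S), by
    simpa [cutState_zero_ne_one] using (isIndepDomSet_metaHex_iff S.1).1 S.2⟩
  invFun p := ⟨ofWalk p.1.1 p.1.2, by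
    obtain ⟨⟨s, F⟩, h0, hlast, hs⟩ := p
    simp only [mem_filter, mem_univ, true_and] at h0 hlast
    rw [isIndepDomSet_metaHex_iff, cutState_ofWalk h0 hs, hexFill_ofWalk]
    exact ⟨hlast, hs⟩⟩
  left_inv S := Subtype.ext ofWalk_cutState_hexFill
  right_inv p := by
    obtain ⟨⟨s, F⟩, h0, -, hs⟩ := p
    simp only [mem_filter, mem_univ, true_and] at h0
    exact Subtype.ext (Prod.ext (cutState_ofWalk h0 hs) hexFill_ofWalk)

theorem numIDSMetaHex_eq_sum (n : ℕ) :
    numIDSMetaHex n = ∑ a ∈ univ.filter (· ≠ 1), ∑ b ∈ univ.filter (· ≠ 2),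
      (transferMatrix Step ^ n) a b := by
  rw [numIDSMetaHex, Nat.card_congr (isIndepDomSetEquivWalk n), card_labelledWalk_eq_sum]

def hexTransfer : Matrix (Fin 3) (Fin 3) ℕ := !![1, 1, 1; 2, 2, 0; 1, 2, 0]

theorem transferMatrix_step : transferMatrix Step = hexTransfer := by
  ext a b
  rw [transferMatrix, Nat.card_eq_fintype_card]
  fin_cases a <;> fin_cases b <;> decide

theorem hexTransfer_pow_three : hexTransfer ^ 3 = 3 • hexTransfer ^ 2 + hexTransfer + 2 • 1 := by
  decide

theorem hexTransfer_pow_add_three (k : ℕ) :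
    hexTransfer ^ (k + 3) =
      3 • hexTransfer ^ (k + 2) + hexTransfer ^ (k + 1) + 2 • hexTransfer ^ k := by
  rw [pow_add, hexTransfer_pow_three, mul_add, mul_add, mul_smul_comm, mul_smul_comm, mul_one,
    ← pow_add, ← pow_succ]

end MetaHex

theorem numIDSMetaHex_recurrence :
    numIDSMetaHex 0 = 1 ∧ numIDSMetaHex 1 = 5 ∧ numIDSMetaHex 2 = 19 ∧
      ∀ n : ℕ, 3 ≤ n →
        numIDSMetaHex n =
          3 * numIDSMetaHex (n - 1) + numIDSMetaHex (n - 2) + 2 * numIDSMetaHex (n - 3) := by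
  simp only [MetaHex.numIDSMetaHex_eq_sum, MetaHex.transferMatrix_step]
  refine ⟨by decide, by decide, by decide, fun n hn => ?_⟩
  obtain ⟨k, rfl⟩ : ∃ k, n = k + 3 := ⟨n - 3, by omega⟩
  simp only [Nat.add_sub_cancel, show k + 3 - 1 = k + 2 by omega, show k + 3 - 2 = k + 1 by omega,
    MetaHex.hexTransfer_pow_add_three, Matrix.add_apply, Matrix.smul_apply, smul_eq_mul, sum_add_distrib,
    mul_sum]
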